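/- Let r ≥ 1 and ε ∈ [0, 3/4]. Model the r noisy reads of a single nucleotide position as i.i.d. random variables Y_1,…,Y_r with values in Fin 4, where the transmitted symbol is 0, Pr(Y_ℓ = 0) = 1 − ε and Pr(Y_ℓ = a) = ε/3 for each a ≠ 0. Then majority-vote consensus with uniform tie-breaking is at least as reliable as a single read: P_corr(r,ε) ≥ 1 − ε, i.e., the post-consensus error rate satisfies ε_(r) = 1 − P_corr(r,ε) ≤ ε. -/
import Mathlib
open Finset

namespace ConsensusAux

variable {r : ℕ}

def cnt (y : Fin r → Fin 4) (a : Fin 4) : ℕ := ({ℓ | y ℓ = a} : Finset (Fin r)).card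

noncomputable def pr (ε : ℝ) (y : Fin r → Fin 4) (a : Fin 4) : ℝ :=
  ∏ ℓ, if y ℓ = a then 1 - ε else ε / 3

noncomputable def w (y : Fin r → Fin 4) (a : Fin 4) : ℝ :=
  if ∀ b, cnt y b ≤ cnt y a then
    (1 : ℝ) / (({b | cnt y b = cnt y a} : Finset (Fin 4)).card : ℝ)
  else 0

lemma cnt_le (y : Fin r → Fin 4) (a : Fin 4) : cnt y a ≤ r := by
  simpa [cnt] using (Finset.card_filter_le univ (fun ℓ => y ℓ = a))

lemma pr_eq (ε : ℝ) (y : Fin r → Fin 4) (a : Fin 4) :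
    pr ε y a = (1 - ε) ^ cnt y a * (ε / 3) ^ (r - cnt y a) := by
  have h := Finset.card_filter_add_card_filter_not
    (s := (univ : Finset (Fin r))) (p := fun ℓ => y ℓ = a)
  rw [pr, Finset.prod_ite, Finset.prod_const, Finset.prod_const]
  have h2 : (filter (fun ℓ => ¬ y ℓ = a) univ).card = r - cnt y a := by
    have : cnt y a = (filter (fun ℓ => y ℓ = a) univ).card := rfl
    simp only [card_univ, Fintype.card_fin] at h
    omega
  rw [h2]; rfl

lemma pr_mono {ε : ℝ} (hε0 : 0 ≤ ε) (hε1 : ε ≤ 3 / 4) (y : Fin r → Fin 4) {a b : Fin 4}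
    (h : cnt y b ≤ cnt y a) : pr ε y b ≤ pr ε y a := by
  have hq : (0:ℝ) ≤ ε / 3 := by linarith
  have hpq : ε / 3 ≤ 1 - ε := by linarith
  have hp : (0:ℝ) ≤ 1 - ε := by linarith
  have hra : cnt y a ≤ r := cnt_le y a
  rw [pr_eq, pr_eq]
  have e1 : r - cnt y b = (cnt y a - cnt y b) + (r - cnt y a) := by omega
  have e2 : cnt y a = cnt y b + (cnt y a - cnt y b) := by omega
  calc (1 - ε) ^ cnt y b * (ε / 3) ^ (r - cnt y b)
      = (1 - ε) ^ cnt y b * ((ε/3) ^ (cnt y a - cnt y b) * (ε/3) ^ (r - cnt y a)) := by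
        rw [← pow_add, ← e1]
    _ ≤ (1 - ε) ^ cnt y b * ((1-ε) ^ (cnt y a - cnt y b) * (ε/3) ^ (r - cnt y a)) := by
        gcongr
    _ = (1 - ε) ^ cnt y a * (ε / 3) ^ (r - cnt y a) := by
        rw [← mul_assoc, ← pow_add, ← e2]

lemma w_nonneg (y : Fin r → Fin 4) (a : Fin 4) : 0 ≤ w y a := by
  unfold w; split
  · positivity
  · exact le_rfl

lemma sum_w (y : Fin r → Fin 4) : ∑ a, w y a = 1 := by
  obtain ⟨a₀, -, ha₀⟩ := Finset.exists_max_image (univ : Finset (Fin 4)) (cnt y) ⟨0, mem_univ 0⟩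
  set M : Finset (Fin 4) := univ.filter (fun a => ∀ b, cnt y b ≤ cnt y a) with hM
  have ha₀M : a₀ ∈ M := by simp [hM]; intro b; exact ha₀ b (mem_univ b)
  have hMpos : (0:ℝ) < (M.card : ℝ) := by
    have := Finset.card_pos.mpr ⟨a₀, ha₀M⟩
    exact_mod_cast this
  have hW : ∀ a, w y a = if a ∈ M then 1 / (M.card : ℝ) else 0 := by
    intro a
    unfold w
    by_cases h : ∀ b, cnt y b ≤ cnt y a
    · rw [if_pos h, if_pos (by simp [hM, h])]
      have hset : ({b | cnt y b = cnt y a} : Finset (Fin 4)) = M := by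
        ext b
        simp only [hM, mem_filter, mem_univ, true_and]
        constructor
        · intro hb c; rw [hb]; exact h c
        · intro hb; exact le_antisymm (h b) (hb a)
      rw [hset]
    · rw [if_neg h, if_neg (by simp [hM, h])]
  rw [Finset.sum_congr rfl (fun a _ => hW a), Finset.sum_ite_mem, univ_inter,
    Finset.sum_const, nsmul_eq_mul]
  field_simp

lemma pointwise {ε : ℝ} (hε0 : 0 ≤ ε) (hε1 : ε ≤ 3 / 4) (ℓ0 : Fin r) (y : Fin r → Fin 4) :
    pr ε y (y ℓ0) ≤ ∑ a, pr ε y a * w y a := by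
  calc pr ε y (y ℓ0) = ∑ a, pr ε y (y ℓ0) * w y a := by
        rw [← Finset.mul_sum, sum_w, mul_one]
    _ ≤ ∑ a, pr ε y a * w y a := by
        apply Finset.sum_le_sum
        intro a _
        by_cases h : ∀ b, cnt y b ≤ cnt y a
        · exact mul_le_mul_of_nonneg_right (pr_mono hε0 hε1 y (h _)) (w_nonneg y a)
        · simp [w, h]

lemma card_filter_comp (P : Fin 4 → Prop) [DecidablePred P] (e : Equiv.Perm (Fin 4)) :
    (univ.filter fun b => P (e b)).card = (univ.filter P).card := by
  apply Finset.card_bij' (fun b _ => e b) (fun b _ => e.symm b)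
  · intro b hb; simp only [mem_filter, mem_univ, true_and] at hb ⊢; exact hb
  · intro b hb; simp only [mem_filter, mem_univ, true_and] at hb ⊢; simpa using hb
  · intro b _; simp
  · intro b _; simp

lemma cnt_comp (y : Fin r → Fin 4) (e : Equiv.Perm (Fin 4)) (b : Fin 4) :
    cnt (⇑e ∘ y) b = cnt y (e.symm b) := by
  unfold cnt
  congr 1
  ext ℓ
  simp [Equiv.apply_eq_iff_eq_symm_apply]

lemma sum_swap_eq (ε : ℝ) (a : Fin 4) :
    ∑ y : Fin r → Fin 4, pr ε y 0 * w y 0 = ∑ y : Fin r → Fin 4, pr ε y a * w y a := by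
  set e := Equiv.swap (0 : Fin 4) a with he
  have hbij : Function.Bijective (fun y : Fin r → Fin 4 => ⇑e ∘ y) :=
    (Equiv.arrowCongr (Equiv.refl (Fin r)) e).bijective
  refine Fintype.sum_bijective _ hbij _ _ ?_
  intro y
  have hsa : e.symm a = 0 := by rw [he, Equiv.symm_swap, Equiv.swap_apply_right]
  have hc : ∀ b, cnt (⇑e ∘ y) b = cnt y (e.symm b) := cnt_comp y e
  have hpr : pr ε (⇑e ∘ y) a = pr ε y 0 := by
    unfold pr
    apply Finset.prod_congr rfl
    intro ℓ _
    have h2 : (e (y ℓ) = a) = (y ℓ = 0) := by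
      rw [eq_iff_iff, Equiv.apply_eq_iff_eq_symm_apply, hsa]
    simp only [Function.comp_apply, h2]
  have hw : w (⇑e ∘ y) a = w y 0 := by
    unfold w
    have hcond : (∀ b, cnt (⇑e ∘ y) b ≤ cnt (⇑e ∘ y) a) ↔ (∀ b, cnt y b ≤ cnt y 0) := by
      simp only [hc, hsa]
      exact (Function.Surjective.forall (p := fun b => cnt y b ≤ cnt y 0) e.symm.surjective).symm
    have hcard : (({b | cnt (⇑e ∘ y) b = cnt (⇑e ∘ y) a} : Finset (Fin 4))).card
        = (({b | cnt y b = cnt y 0} : Finset (Fin 4))).card := by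
      simp only [hc, hsa]
      exact card_filter_comp (fun b => cnt y b = cnt y 0) e.symm
    by_cases h : ∀ b, cnt y b ≤ cnt y 0
    · rw [if_pos (hcond.mpr h), if_pos h, hcard]
    · rw [if_neg (fun hh => h (hcond.mp hh)), if_neg h]
  rw [hpr, hw]

lemma sum_ite_fin4 (a : Fin 4) (c d : ℝ) : ∑ b : Fin 4, (if b = a then c else d) = c + 3 * d := by
  fin_cases a <;> simp [Fin.sum_univ_four] <;> ring

lemma sum_pr_indicator (ε : ℝ) (a : Fin 4) (ℓ0 : Fin r) :
    ∑ y : Fin r → Fin 4, pr ε y a * (if y ℓ0 = a then (1:ℝ) else 0) = 1 - ε := by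
  have key : ∀ y : Fin r → Fin 4,
      pr ε y a * (if y ℓ0 = a then (1:ℝ) else 0)
        = ∏ ℓ, (if ℓ = ℓ0 then (if y ℓ = a then 1 - ε else 0)
            else (if y ℓ = a then 1 - ε else ε / 3)) := by
    intro y
    by_cases h : y ℓ0 = a
    · rw [if_pos h, mul_one, pr]
      apply Finset.prod_congr rfl
      intro ℓ _
      rcases eq_or_ne ℓ ℓ0 with rfl | hne
      · simp [h]
      · simp [hne]
    · rw [if_neg h, mul_zero]
      symm
      apply Finset.prod_eq_zero (Finset.mem_univ ℓ0)
      simp [h]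
  rw [Finset.sum_congr rfl (fun y _ => key y)]
  have hfac := Finset.prod_univ_sum (fun _ : Fin r => (univ : Finset (Fin 4)))
    (fun ℓ b => if ℓ = ℓ0 then (if b = a then 1 - ε else 0) else (if b = a then 1 - ε else ε / 3))
  rw [Fintype.piFinset_univ] at hfac
  rw [← hfac]
  have hcol : ∀ ℓ : Fin r,
      (∑ b : Fin 4, if ℓ = ℓ0 then (if b = a then 1 - ε else 0)
          else (if b = a then 1 - ε else ε / 3))
        = if ℓ = ℓ0 then 1 - ε else 1 := by
    intro ℓ
    rcases eq_or_ne ℓ ℓ0 with rfl | hne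
    · simp [sum_ite_fin4]
    · simp only [if_neg hne, sum_ite_fin4]
      ring
  rw [Finset.prod_congr rfl (fun ℓ _ => hcol ℓ), Finset.prod_ite_eq' univ ℓ0 (fun _ => 1 - ε),
    if_pos (mem_univ ℓ0)]

end ConsensusAux

open ConsensusAux in
/-- Majority-vote consensus with uniform tie-breaking over `r ≥ 1` i.i.d. noisy reads of a
single nucleotide (QSC error rate `ε ≤ 3/4`, transmitted symbol `0 : Fin 4`) is at least as
reliable as a single read: `P_corr(r, ε) ≥ 1 - ε`, i.e., the post-consensus error rate
satisfies `ε_(r) = 1 - P_corr(r, ε) ≤ ε`. -/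
theorem consensus_at_least_as_reliable_as_single_read (r : ℕ) (hr : 1 ≤ r) (ε : ℝ)
    (hε0 : 0 ≤ ε) (hε1 : ε ≤ 3 / 4) :
    1 - ε ≤
      ∑ y : Fin r → Fin 4,
        (∏ ℓ : Fin r, (if y ℓ = 0 then 1 - ε else ε / 3)) *
          (if ∀ a : Fin 4,
              ({ℓ | y ℓ = a} : Finset (Fin r)).card ≤ ({ℓ | y ℓ = 0} : Finset (Fin r)).card
           then (1 : ℝ) /
              (({a : Fin 4 |
                ({ℓ | y ℓ = a} : Finset (Fin r)).card
                  = ({ℓ | y ℓ = 0} : Finset (Fin r)).card} : Finset (Fin 4)).card : ℝ)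
           else 0) := by
  show 1 - ε ≤ ∑ y : Fin r → Fin 4, pr ε y 0 * w y 0
  set ℓ0 : Fin r := ⟨0, hr⟩
  have h4 : (4:ℝ) * (1 - ε) ≤ 4 * ∑ y : Fin r → Fin 4, pr ε y 0 * w y 0 := by
    calc (4:ℝ) * (1 - ε) = ∑ _a : Fin 4, (1 - ε) := by
          simp only [Finset.sum_const, Finset.card_univ, Fintype.card_fin, nsmul_eq_mul]
          norm_num
      _ = ∑ a : Fin 4, ∑ y : Fin r → Fin 4, pr ε y a * (if y ℓ0 = a then 1 else 0) :=
          Finset.sum_congr rfl fun a _ => (sum_pr_indicator ε a ℓ0).symm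
      _ = ∑ y : Fin r → Fin 4, ∑ a : Fin 4, pr ε y a * (if y ℓ0 = a then 1 else 0) :=
          Finset.sum_comm
      _ = ∑ y : Fin r → Fin 4, pr ε y (y ℓ0) := by
          refine Finset.sum_congr rfl fun y _ => ?_
          simp [mul_ite, mul_one, mul_zero, Finset.sum_ite_eq]
      _ ≤ ∑ y : Fin r → Fin 4, ∑ a : Fin 4, pr ε y a * w y a :=
          Finset.sum_le_sum fun y _ => pointwise hε0 hε1 ℓ0 y
      _ = ∑ a : Fin 4, ∑ y : Fin r → Fin 4, pr ε y a * w y a := Finset.sum_comm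
      _ = ∑ _a : Fin 4, ∑ y : Fin r → Fin 4, pr ε y 0 * w y 0 :=
          Finset.sum_congr rfl fun a _ => (sum_swap_eq ε a).symm
      _ = 4 * ∑ y : Fin r → Fin 4, pr ε y 0 * w y 0 := by
          simp only [Finset.sum_const, Finset.card_univ, Fintype.card_fin, nsmul_eq_mul]
          norm_num
  linarith
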